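/- Let Λ be a 3×3 real matrix whose singular values are all at most 1, let t ∈ ℝ³, and let M = (ΛΛᵀ + 5 t tᵀ)/2 have eigenvalues M₁ ≥ M₂ ≥ M₃. Then M₂ + M₃ ≤ 1. -/

import Mathlib

open Matrix

/-- `μ` lists the eigenvalues of the real symmetric 3×3 matrix `M` in nonincreasing
order, via an orthogonal diagonalization `M = Oᵀ (diag μ) O`. -/
def EigOrdered (M : Matrix (Fin 3) (Fin 3) ℝ) (μ : Fin 3 → ℝ) : Prop :=
  (∃ O : Matrix (Fin 3) (Fin 3) ℝ, Oᵀ * O = 1 ∧ M = Oᵀ * Matrix.diagonal μ * O) ∧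
  μ 1 ≤ μ 0 ∧ μ 2 ≤ μ 1

/-!
Pick orthonormal `a, b ⊥ t`. On them the rank-one term `5ttᵀ` vanishes and `ΛΛᵀ ≤ I`, so
`aᵀMa + bᵀMb ≤ 1`. By the Ky Fan principle the sum of the two smallest eigenvalues of `M` is
at most the trace of `M` compressed to any plane, here `span {a, b}`.
-/

open Module

lemma exists_orthonormal_pair_orthogonal {E : Type*} [NormedAddCommGroup E]
    [InnerProductSpace ℝ E] [FiniteDimensional ℝ E] (hE : 3 ≤ finrank ℝ E) (t : E) :
    ∃ v : Fin 2 → E, Orthonormal ℝ v ∧ ∀ i, inner ℝ t (v i) = 0 := by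
  have hK : 2 ≤ finrank ℝ (ℝ ∙ t)ᗮ := by
    have := Submodule.finrank_add_finrank_orthogonal (ℝ ∙ t)
    have : finrank ℝ (ℝ ∙ t) ≤ 1 := by simpa using finrank_span_le_card ({t} : Set E)
    omega
  set K := (ℝ ∙ t)ᗮ
  have hb := (stdOrthonormalBasis ℝ K).orthonormal.comp _ (Fin.castLE_injective hK)
  refine ⟨fun i ↦ (stdOrthonormalBasis ℝ K (Fin.castLE hK i) : E),
    hb.comp_linearIsometry K.subtypeₗᵢ, fun i ↦ ?_⟩
  exact Submodule.mem_orthogonal_singleton_iff_inner_right.1 (Subtype.prop _)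

lemma exists_orthonormal_pair_dotProduct_eq_zero {ι : Type*} [Fintype ι]
    (hι : 3 ≤ Fintype.card ι) (t : ι → ℝ) :
    ∃ a b : ι → ℝ, a ⬝ᵥ a = 1 ∧ b ⬝ᵥ b = 1 ∧ a ⬝ᵥ b = 0 ∧ t ⬝ᵥ a = 0 ∧ t ⬝ᵥ b = 0 := by
  obtain ⟨v, hv, htv⟩ := exists_orthonormal_pair_orthogonal
    (by simpa using hι : 3 ≤ finrank ℝ (EuclideanSpace ℝ ι)) (WithLp.toLp 2 t)
  have hinner (x y : EuclideanSpace ℝ ι) : inner ℝ x y = x.ofLp ⬝ᵥ y.ofLp := by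
    simp [EuclideanSpace.inner_eq_star_dotProduct, dotProduct_comm]
  simp only [orthonormal_iff_ite, hinner] at hv htv
  exact ⟨(v 0).ofLp, (v 1).ofLp, by simpa using hv 0 0, by simpa using hv 1 1,
    by simpa using hv 0 1, htv 0, htv 1⟩

lemma sq_dotProduct_add_sq_dotProduct_le {ι : Type*} [Fintype ι] {a b : ι → ℝ}
    (ha : a ⬝ᵥ a = 1) (hb : b ⬝ᵥ b = 1) (hab : a ⬝ᵥ b = 0) (v : ι → ℝ) :
    (v ⬝ᵥ a) ^ 2 + (v ⬝ᵥ b) ^ 2 ≤ v ⬝ᵥ v := by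
  set r := v - (v ⬝ᵥ a) • a - (v ⬝ᵥ b) • b
  have hr : r ⬝ᵥ r = v ⬝ᵥ v - (v ⬝ᵥ a) ^ 2 - (v ⬝ᵥ b) ^ 2 := by
    simp only [r, sub_dotProduct, dotProduct_sub, smul_dotProduct, dotProduct_smul, smul_eq_mul,
      dotProduct_comm a v, dotProduct_comm b v, dotProduct_comm b a, ha, hb, hab]
    ring
  have hr_nonneg : 0 ≤ r ⬝ᵥ r := Fintype.sum_nonneg fun _ ↦ mul_self_nonneg _
  linarith

lemma dotProduct_mulVec_mulVec_of_transpose_mul_self {ι : Type*} [Fintype ι] [DecidableEq ι]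
    {O : Matrix ι ι ℝ} (hO : Oᵀ * O = 1) (x y : ι → ℝ) :
    (O *ᵥ x) ⬝ᵥ (O *ᵥ y) = x ⬝ᵥ y := by
  rw [dotProduct_mulVec, ← vecMul_transpose, vecMul_vecMul, hO, vecMul_one]

lemma dotProduct_transpose_mul_diagonal_mul_mulVec {ι : Type*} [Fintype ι] [DecidableEq ι]
    (O : Matrix ι ι ℝ) (μ x : ι → ℝ) :
    x ⬝ᵥ (Oᵀ * diagonal μ * O) *ᵥ x = ∑ i, μ i * (O *ᵥ x) i ^ 2 := by
  rw [Matrix.mul_assoc, ← mulVec_mulVec, dotProduct_mulVec, vecMul_transpose, ← mulVec_mulVec]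
  simp only [dotProduct, mulVec_diagonal]
  exact Finset.sum_congr rfl fun i _ ↦ by ring

lemma add_le_sum_mul_of_le_one {μ w : Fin 3 → ℝ} (h01 : μ 1 ≤ μ 0) (h12 : μ 2 ≤ μ 1)
    (hw1 : w 1 ≤ 1) (hw2 : w 2 ≤ 1) (hw : ∑ i, w i = 2) :
    μ 1 + μ 2 ≤ ∑ i, μ i * w i := by
  rw [Fin.sum_univ_three] at hw ⊢
  rw [show w 0 = 2 - w 1 - w 2 by linarith]
  -- the difference of the two sides is `(μ 0 - μ 1)(1 - w 1) + (μ 0 - μ 2)(1 - w 2)`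
  nlinarith [mul_nonneg (sub_nonneg.2 h01) (sub_nonneg.2 hw1),
    mul_nonneg (sub_nonneg.2 (h12.trans h01)) (sub_nonneg.2 hw2)]

lemma EigOrdered.add_le_dotProduct_mulVec_add {M : Matrix (Fin 3) (Fin 3) ℝ} {μ : Fin 3 → ℝ}
    (hμ : EigOrdered M μ) {a b : Fin 3 → ℝ} (ha : a ⬝ᵥ a = 1) (hb : b ⬝ᵥ b = 1)
    (hab : a ⬝ᵥ b = 0) :
    μ 1 + μ 2 ≤ a ⬝ᵥ M *ᵥ a + b ⬝ᵥ M *ᵥ b := by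
  obtain ⟨⟨O, hO, rfl⟩, h01, h12⟩ := hμ
  have hisom := dotProduct_mulVec_mulVec_of_transpose_mul_self hO
  -- Bessel's inequality for the basis vector `Pi.single i 1` against `O a, O b`.
  have hcoord (i : Fin 3) : (O *ᵥ a) i ^ 2 + (O *ᵥ b) i ^ 2 ≤ 1 := by
    simpa [single_dotProduct] using sq_dotProduct_add_sq_dotProduct_le
      ((hisom a a).trans ha) ((hisom b b).trans hb) ((hisom a b).trans hab) (Pi.single i 1)
  have hsum : ∑ i, ((O *ᵥ a) i ^ 2 + (O *ᵥ b) i ^ 2) = 2 := by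
    simp only [Finset.sum_add_distrib, sq]
    rw [← dotProduct, ← dotProduct, hisom, hisom, ha, hb]
    norm_num
  rw [dotProduct_transpose_mul_diagonal_mul_mulVec, dotProduct_transpose_mul_diagonal_mul_mulVec,
    ← Finset.sum_add_distrib]
  simp only [← mul_add]
  exact add_le_sum_mul_of_le_one h01 h12 (hcoord 1) (hcoord 2) hsum

lemma dotProduct_half_smul_add_smul_vecMulVec_mulVec_le {ι : Type*} [Fintype ι]
    {Λ : Matrix ι ι ℝ} (hΛ : ∀ x : ι → ℝ, x ⬝ᵥ (Λ * Λᵀ) *ᵥ x ≤ x ⬝ᵥ x) (c : ℝ) {t x : ι → ℝ}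
    (htx : t ⬝ᵥ x = 0) (hx : x ⬝ᵥ x = 1) :
    x ⬝ᵥ ((1/2 : ℝ) • (Λ * Λᵀ + c • vecMulVec t t)) *ᵥ x ≤ 1/2 := by
  have hrank : vecMulVec t t *ᵥ x = 0 := by simp [vecMulVec_mulVec, htx]
  rw [smul_mulVec, add_mulVec, smul_mulVec, hrank, smul_zero, add_zero, dotProduct_smul,
    smul_eq_mul]
  linarith [hΛ x]

/-- If all singular values of `Λ` are at most 1 (i.e. `ΛΛᵀ ≤ I` in the Loewner
order), then the sum of the two smallest eigenvalues of `M = (ΛΛᵀ + 5ttᵀ)/2`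
is at most 1. -/
theorem stmt5 (Λ : Matrix (Fin 3) (Fin 3) ℝ) (t : Fin 3 → ℝ)
    (hsing : ∀ x : Fin 3 → ℝ, x ⬝ᵥ (Λ * Λᵀ).mulVec x ≤ x ⬝ᵥ x)
    (μ : Fin 3 → ℝ)
    (hμ : EigOrdered ((1/2 : ℝ) • (Λ * Λᵀ + (5 : ℝ) • vecMulVec t t)) μ) :
    μ 1 + μ 2 ≤ 1 := by
  obtain ⟨a, b, ha, hb, hab, hta, htb⟩ :=
    exists_orthonormal_pair_dotProduct_eq_zero (by simp) t
  have hKyFan := hμ.add_le_dotProduct_mulVec_add ha hb hab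
  have hqa := dotProduct_half_smul_add_smul_vecMulVec_mulVec_le hsing 5 hta ha
  have hqb := dotProduct_half_smul_add_smul_vecMulVec_mulVec_le hsing 5 htb hb
  linarith
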